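/- arXiv:1512.04195 — 9 statements merged into one kernel-verified Lean document; each statement's English description precedes it below -/
import Mathlib

section
/- Brown's Lemma: for every finite coloring C : ℕ → Fin r, there exists a color i and a natural number d such that for every n there is a finite set H ⊆ ℕ of size at least n, monochromatic in color i (C(x) = i for all x ∈ H), whose consecutive elements differ by at most d. -/
/-- `H` has gaps bounded by `d`: any element with a successor in `H` has one within `d`. -/
def GapsBdd (H : Finset ℕ) (d : ℕ) : Prop :=
  ∀ x ∈ H, (∃ y ∈ H, x < y) → ∃ z ∈ H, x < z ∧ z ≤ x + d

/-- gap size: largest difference between consecutive elements; `1` if `|H| ≤ 1`. -/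
noncomputable def gapSize (H : Finset ℕ) : ℕ :=
  if H.card ≤ 1 then 1 else sInf {d | GapsBdd H d}

/-- `X` is piecewise `d`-syndetic. -/
def PWSyndWith (d : ℕ) (X : Set ℕ) : Prop :=
  ∀ n : ℕ, ∃ H : Finset ℕ, (∀ x ∈ H, x ∈ X) ∧ n ≤ H.card ∧ GapsBdd H d

/-- `X` is piecewise syndetic. -/
def PWSynd (X : Set ℕ) : Prop := ∃ d, PWSyndWith d X

/-- consecutive elements of `X` differ by at most `d`. -/
def SyndWith (d : ℕ) (X : Set ℕ) : Prop :=
  ∀ x ∈ X, ∃ y ∈ X, x < y ∧ y ≤ x + d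

/-- `X` is syndetic: an infinite set with bounded gaps. -/
def Syndetic (X : Set ℕ) : Prop := X.Infinite ∧ ∃ d, SyndWith d X

/-- `X` is thick: contains arbitrarily long intervals. -/
def Thick (X : Set ℕ) : Prop := ∀ n : ℕ, ∃ a : ℕ, ∀ m, a ≤ m → m < a + n → m ∈ X

/-- `X` contains arbitrarily long arithmetic progressions. -/
def APSet (X : Set ℕ) : Prop := ∀ l : ℕ, ∃ a e : ℕ, 0 < e ∧ ∀ i < l, a + i * e ∈ X

open Classical in
lemma pwsynd_mono {d : ℕ} {X Y : Set ℕ} (h : X ⊆ Y) (hX : PWSyndWith d X) :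
    PWSyndWith d Y := by
  intro n
  obtain ⟨H, h1, h2, h3⟩ := hX n
  exact ⟨H, fun x hx => h (h1 x hx), h2, h3⟩

open Classical in
lemma thick_union_aux {X Y : Set ℕ} (h : Thick (X ∪ Y)) : PWSynd X ∨ Thick Y := by
  by_cases hX : PWSynd X
  · exact Or.inl hX
  right
  intro L
  rcases Nat.eq_zero_or_pos L with hL | hL
  · exact ⟨0, fun m hm hm' => absurd (hm.trans_lt hm') (by omega)⟩
  have hX' : ¬ PWSyndWith L X := fun hc => hX ⟨L, hc⟩
  unfold PWSyndWith at hX'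
  push_neg at hX'
  obtain ⟨n, hn⟩ := hX'
  obtain ⟨a, ha⟩ := h (n * L)
  by_contra hY
  push_neg at hY
  -- every window of length L inside [a, a + n*L) contains an element of X
  have key : ∀ p, a ≤ p → p + L ≤ a + n * L → ∃ m, p ≤ m ∧ m < p + L ∧ m ∈ X := by
    intro p hp hp'
    obtain ⟨m, hm1, hm2, hm3⟩ := hY p
    have hmem : m ∈ X ∪ Y := ha m (by omega) (by omega)
    rcases hmem with hx | hy
    · exact ⟨m, hm1, hm2, hx⟩
    · exact absurd hy hm3
  set H : Finset ℕ := (Finset.Ico a (a + n * L)).filter (fun x => x ∈ X) with hHdef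
  have hHX : ∀ x ∈ H, x ∈ X := by
    intro x hx
    exact (Finset.mem_filter.mp hx).2
  have hHIco : ∀ x ∈ H, a ≤ x ∧ x < a + n * L := by
    intro x hx
    exact Finset.mem_Ico.mp (Finset.mem_filter.mp hx).1
  -- card bound via one point per window
  have hg : ∀ j : ℕ, ∃ m, a + j * L ≤ m ∧ m < a + j * L + L ∧ (j < n → m ∈ X) := by
    intro j
    by_cases hj : j < n
    · obtain ⟨m, h1, h2, h3⟩ := key (a + j * L) (by omega) (by nlinarith)
      exact ⟨m, h1, h2, fun _ => h3⟩
    · exact ⟨a + j * L, le_rfl, by omega, fun h => absurd h hj⟩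
  choose g hg1 hg2 hg3 using hg
  have hgmono : StrictMono g := by
    intro j k hjk
    have h1 := hg2 j
    have h2 := hg1 k
    have : a + j * L + L ≤ a + k * L := by nlinarith
    omega
  have hcard : n ≤ H.card := by
    have hsub : (Finset.range n).image g ⊆ H := by
      intro x hx
      obtain ⟨j, hj, rfl⟩ := Finset.mem_image.mp hx
      have hj' := Finset.mem_range.mp hj
      refine Finset.mem_filter.mpr ⟨Finset.mem_Ico.mpr ⟨by have := hg1 j; omega, ?_⟩, hg3 j hj'⟩
      have := hg2 j
      have : a + j * L + L ≤ a + n * L := by nlinarith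
      omega
    calc n = ((Finset.range n).image g).card := by
            rw [Finset.card_image_of_injective _ hgmono.injective, Finset.card_range]
      _ ≤ H.card := Finset.card_le_card hsub
  have hgaps : GapsBdd H L := by
    intro x hx ⟨y, hy, hxy⟩
    by_cases hcase : x + 1 + L ≤ a + n * L
    · obtain ⟨m, hm1, hm2, hm3⟩ := key (x + 1) (by have := (hHIco x hx).1; omega) hcase
      refine ⟨m, ?_, by omega, by omega⟩
      exact Finset.mem_filter.mpr ⟨Finset.mem_Ico.mpr ⟨by have := (hHIco x hx).1; omega, by omega⟩, hm3⟩
    · have := (hHIco y hy).2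
      exact ⟨y, hy, hxy, by omega⟩
  exact hn H hHX hcard hgaps

open Classical in
lemma brown_aux (r : ℕ) (C : ℕ → Fin r) :
    ∀ k (T : Set ℕ), Thick T → (∀ x ∈ T, (C x : ℕ) < k) →
      ∃ (i : Fin r) (d : ℕ), PWSyndWith d {x ∈ T | C x = i} := by
  intro k
  induction k with
  | zero =>
    intro T hT hb
    obtain ⟨a, ha⟩ := hT 1
    have := hb a (ha a le_rfl (by omega))
    omega
  | succ k ih =>
    intro T hT hb
    set X := {x ∈ T | (C x : ℕ) = k} with hXdef
    set Y := {x ∈ T | (C x : ℕ) ≠ k} with hYdef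
    have hU : X ∪ Y = T := by
      ext x
      simp only [hXdef, hYdef, Set.mem_union, Set.mem_setOf_eq]
      tauto
    rcases thick_union_aux (X := X) (Y := Y) (by rwa [hU]) with hx | hy
    · obtain ⟨d, hd⟩ := hx
      obtain ⟨H, hH1, hH2, _⟩ := hd 1
      obtain ⟨x0, hx0⟩ := Finset.card_pos.mp (show 0 < H.card by omega)
      have hx0X : x0 ∈ X := hH1 x0 hx0
      refine ⟨C x0, d, pwsynd_mono ?_ hd⟩
      intro x hx
      have hxX : x ∈ X := hx
      refine ⟨hxX.1, ?_⟩
      apply Fin.ext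
      rw [hxX.2, hx0X.2]
    · have hbY : ∀ x ∈ Y, (C x : ℕ) < k := by
        intro x hx
        have := hb x hx.1
        have := hx.2
        omega
      obtain ⟨i, d, hd⟩ := ih Y hy hbY
      refine ⟨i, d, pwsynd_mono ?_ hd⟩
      intro x hx
      exact ⟨hx.1.1, hx.2⟩

/-- Brown's Lemma. -/
theorem brown_lemma (r : ℕ) (C : ℕ → Fin r) :
    ∃ (i : Fin r) (d : ℕ), ∀ n : ℕ, ∃ H : Finset ℕ,
      n ≤ H.card ∧ (∀ x ∈ H, C x = i) ∧ GapsBdd H d := by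
  have hthick : Thick (Set.univ : Set ℕ) := fun n => ⟨0, fun m _ _ => trivial⟩
  obtain ⟨i, d, hd⟩ := brown_aux r C r Set.univ hthick (fun x _ => (C x).isLt)
  refine ⟨i, d, fun n => ?_⟩
  obtain ⟨H, h1, h2, h3⟩ := hd n
  exact ⟨H, h2, fun x hx => (h1 x hx).2, h3⟩
end

section
/- If X ⊆ ℕ is piecewise syndetic and X = X₀ ∪ ⋯ ∪ X_{r-1} is a finite partition, then some X_i is piecewise syndetic. -/
lemma genChain (H : Finset ℕ) (S : Set ℕ) (e : ℕ)
    (step : ∀ x ∈ H, (∃ y ∈ H, x + e < y) → ∃ z ∈ H, z ∈ S ∧ x < z ∧ z ≤ x + e) :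
    ∀ k x, x ∈ H → (∃ y ∈ H, x + e * k < y) →
    ∃ C : Finset ℕ, C.card = k ∧ GapsBdd C e ∧
      ∀ c ∈ C, c ∈ H ∧ c ∈ S ∧ x < c ∧ c ≤ x + e * k := by
  intro k
  induction k with
  | zero =>
    intro x hx _
    exact ⟨∅, by simp, fun a ha => by simp at ha, fun c hc => by simp at hc⟩
  | succ k ih =>
    intro x hx hy
    obtain ⟨y, hyH, hxy⟩ := hy
    have hek : e * k ≤ e * (k + 1) := Nat.mul_le_mul_left e (by omega)
    have hmul : e * (k + 1) = e * k + e := by ring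
    obtain ⟨C, hcard, hgap, hmem⟩ := ih x hx ⟨y, hyH, by omega⟩
    rcases Nat.eq_zero_or_pos k with hk | hk
    · subst hk
      obtain ⟨z, hzH, hzS, hxz, hze⟩ := step x hx ⟨y, hyH, by omega⟩
      refine ⟨{z}, by simp, ?_, ?_⟩
      · intro c hc hsucc
        simp only [Finset.mem_singleton] at hc
        obtain ⟨w, hw, hcw⟩ := hsucc
        simp only [Finset.mem_singleton] at hw
        omega
      · intro c hc
        simp only [Finset.mem_singleton] at hc
        subst hc
        exact ⟨hzH, hzS, hxz, by omega⟩
    · have hCne : C.Nonempty := Finset.card_pos.mp (by omega)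
      set m := C.max' hCne with hm
      have hmC : m ∈ C := C.max'_mem hCne
      obtain ⟨hmH, hmS, hxm, hmle⟩ := hmem m hmC
      obtain ⟨z, hzH, hzS, hmz, hze⟩ := step m hmH ⟨y, hyH, by omega⟩
      have hzC : z ∉ C := fun h => absurd (C.le_max' z h) (by omega)
      refine ⟨insert z C, by rw [Finset.card_insert_of_notMem hzC, hcard], ?_, ?_⟩
      · intro c hc hsucc
        rcases Finset.mem_insert.mp hc with rfl | hcC
        · exfalso
          obtain ⟨w, hw, hcw⟩ := hsucc
          rcases Finset.mem_insert.mp hw with rfl | hwC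
          · omega
          · exact absurd (C.le_max' w hwC) (by omega)
        · by_cases hs : ∃ w ∈ C, c < w
          · obtain ⟨w, hwC, hcw, hwe⟩ := hgap c hcC hs
            exact ⟨w, Finset.mem_insert_of_mem hwC, hcw, hwe⟩
          · push_neg at hs
            have hcm : m ≤ c := hs m hmC
            have hcm2 : c ≤ m := C.le_max' c hcC
            exact ⟨z, Finset.mem_insert_self z C, by omega, by omega⟩
      · intro c hc
        rcases Finset.mem_insert.mp hc with rfl | hcC
        · exact ⟨hzH, hzS, by omega, by omega⟩
        · obtain ⟨h1, h2, h3, h4⟩ := hmem c hcC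
          exact ⟨h1, h2, h3, by omega⟩

lemma window (H : Finset ℕ) (d k : ℕ) (A B : Set ℕ) (hgap : GapsBdd H d)
    (hsub : ∀ x ∈ H, x ∈ A ∪ B)
    (hA : ∀ C : Finset ℕ, (∀ c ∈ C, c ∈ A) → GapsBdd C d → C.card < k) :
    ∀ x ∈ H, (∃ y ∈ H, x + d * k < y) → ∃ z ∈ H, z ∈ B ∧ x < z ∧ z ≤ x + d * k := by
  have step : ∀ x ∈ H, (∃ y ∈ H, x + d < y) →
      ∃ z ∈ H, z ∈ (Set.univ : Set ℕ) ∧ x < z ∧ z ≤ x + d := by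
    intro x hx hs
    obtain ⟨z, hzH, hxz, hze⟩ := hgap x hx (by obtain ⟨y, hy, h⟩ := hs; exact ⟨y, hy, by omega⟩)
    exact ⟨z, hzH, Set.mem_univ z, hxz, hze⟩
  intro x hx hy
  obtain ⟨C, hcard, hCgap, hmem⟩ := genChain H Set.univ d step k x hx hy
  by_cases h : ∃ z ∈ C, z ∈ B
  · obtain ⟨z, hzC, hzB⟩ := h
    obtain ⟨h1, _, h3, h4⟩ := hmem z hzC
    exact ⟨z, h1, hzB, h3, h4⟩
  · push_neg at h
    exfalso
    have hCA : ∀ c ∈ C, c ∈ A := fun c hc =>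
      (hsub c (hmem c hc).1).resolve_right (h c hc)
    have := hA C hCA hCgap
    omega

lemma key (d : ℕ) (X A B : Set ℕ) (hX : PWSyndWith d X)
    (hXAB : ∀ x, x ∈ X → x ∈ A ∪ B) (hA : ¬ PWSynd A) : PWSynd B := by
  have hAd : ¬ PWSyndWith d A := fun h => hA ⟨d, h⟩
  unfold PWSyndWith at hAd
  push_neg at hAd
  obtain ⟨k, hk⟩ := hAd
  have hA' : ∀ C : Finset ℕ, (∀ c ∈ C, c ∈ A) → GapsBdd C d → C.card < k := by
    intro C hCA hCg
    by_contra hle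
    exact hk C hCA (by omega) hCg
  refine ⟨d * k, fun n => ?_⟩
  obtain ⟨H, hHX, hHcard, hHgap⟩ := hX (d * k * n + 2)
  have hne : H.Nonempty := Finset.card_pos.mp (by omega)
  set x := H.min' hne with hxdef
  set y := H.max' hne with hydef
  have hxy : x + d * k * n < y := by
    have hsub : H ⊆ Finset.Icc x y :=
      fun a ha => Finset.mem_Icc.mpr ⟨H.min'_le a ha, H.le_max' a ha⟩
    have := Finset.card_le_card hsub
    rw [Nat.card_Icc] at this
    omega
  obtain ⟨C, hcard, hgapC, hmem⟩ :=
    genChain H B (d * k)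
      (window H d k A B hHgap (fun a ha => hXAB a (hHX a ha)) hA')
      n x (H.min'_mem hne) ⟨y, H.max'_mem hne, hxy⟩
  exact ⟨C, fun c hc => (hmem c hc).2.1, le_of_eq hcard.symm, hgapC⟩

lemma aux : ∀ (r : ℕ) (X : Set ℕ) (P : Fin r → Set ℕ),
    PWSynd X → X = ⋃ i, P i → ∃ i, PWSynd (P i) := by
  intro r
  induction r with
  | zero =>
    intro X P hX hpart
    exfalso
    obtain ⟨d, h⟩ := hX
    obtain ⟨H, hm, hc, _⟩ := h 1
    have hne : H.Nonempty := Finset.card_pos.mp (by omega)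
    obtain ⟨a, ha⟩ := hne
    have := hm a ha
    rw [hpart] at this
    simp at this
  | succ r ih =>
    intro X P hX hpart
    by_cases h0 : PWSynd (P 0)
    · exact ⟨0, h0⟩
    · obtain ⟨d, hXd⟩ := hX
      have hsub : ∀ x, x ∈ X → x ∈ P 0 ∪ ⋃ i : Fin r, P i.succ := by
        intro x hx
        rw [hpart] at hx
        obtain ⟨i, hi⟩ := Set.mem_iUnion.mp hx
        rcases Fin.eq_zero_or_eq_succ i with rfl | ⟨j, rfl⟩
        · exact Or.inl hi
        · exact Or.inr (Set.mem_iUnion.mpr ⟨j, hi⟩)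
      have hB : PWSynd (⋃ i : Fin r, P i.succ) :=
        key d X (P 0) (⋃ i : Fin r, P i.succ) hXd hsub h0
      obtain ⟨j, hj⟩ := ih (⋃ i : Fin r, P i.succ) (fun i => P i.succ) hB rfl
      exact ⟨j.succ, hj⟩


/-- Partition regularity of piecewise syndetic sets. -/
theorem pws_partition_regular (X : Set ℕ) (r : ℕ) (P : Fin r → Set ℕ)
    (hX : PWSynd X) (hpart : X = ⋃ i, P i) :
    ∃ i, PWSynd (P i) := aux r X P hX hpart
end

section
/- If X ⊆ ℕ is syndetic with gaps bounded by d, and X = X₀ ∪ X₁ is a 2-partition, then either both X₀ and X₁ are piecewise d-syndetic, or one of X₀, X₁ is syndetic. -/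
/-- above any point past an element, there is an element of `X` within `d`. -/
lemma synd_window {X : Set ℕ} {d : ℕ} (hsyn : SyndWith d X) :
    ∀ t : ℕ, (∃ z ∈ X, z ≤ t) → ∃ y ∈ X, t < y ∧ y ≤ t + d := by
  intro t
  induction t with
  | zero =>
    rintro ⟨z, hz, hz0⟩
    obtain ⟨y, hy, h1, h2⟩ := hsyn z hz
    exact ⟨y, hy, by omega, by omega⟩
  | succ m ih =>
    rintro ⟨z, hz, hzt⟩
    rcases Nat.lt_or_ge m z with h | h
    · obtain ⟨y, hy, h1, h2⟩ := hsyn z hz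
      exact ⟨y, hy, by omega, by omega⟩
    · obtain ⟨y, hy, h1, h2⟩ := ih ⟨z, hz, h⟩
      rcases Nat.lt_or_ge (m + 1) y with h3 | h3
      · exact ⟨y, hy, h3, by omega⟩
      · obtain ⟨w, hw, w1, w2⟩ := hsyn y hy
        exact ⟨w, hw, by omega, by omega⟩

/-- if one part of the partition is finite, the other is syndetic. -/
lemma finite_case (X X₀ X₁ : Set ℕ) (d : ℕ) (hinf : X.Infinite)
    (hsyn : SyndWith d X) (hpart : X = X₀ ∪ X₁) (hfin : X₀.Finite) :
    Syndetic X₁ := by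
  have hsub : X \ X₀ ⊆ X₁ := by
    intro a ha
    have : a ∈ X₀ ∪ X₁ := hpart ▸ ha.1
    rcases this with h | h
    · exact absurd h ha.2
    · exact h
  have hX1inf : X₁.Infinite := (hinf.diff hfin).mono hsub
  obtain ⟨N, hN⟩ := hfin.bddAbove
  refine ⟨hX1inf, N + d, ?_⟩
  intro x hx
  have hxX : x ∈ X := by rw [hpart]; exact Or.inr hx
  obtain ⟨y, hy, h1, h2⟩ := synd_window hsyn (max x N) ⟨x, hxX, le_max_left _ _⟩
  have hyX1 : y ∈ X₁ := by
    have : y ∈ X₀ ∪ X₁ := hpart ▸ hy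
    rcases this with h | h
    · exact absurd (hN h) (by omega : ¬ y ≤ N)
    · exact h
  exact ⟨y, hyX1, by omega, by omega⟩

/-- if one part is not piecewise `d`-syndetic and the other is infinite,
the other is syndetic. -/
lemma not_pw_case (X X₀ X₁ : Set ℕ) (d : ℕ)
    (hsyn : SyndWith d X) (hpart : X = X₀ ∪ X₁)
    (hX1 : X₁.Infinite) (hnp : ¬ PWSyndWith d X₀) : Syndetic X₁ := by
  classical
  unfold PWSyndWith at hnp
  push_neg at hnp
  obtain ⟨n, hn⟩ := hnp
  have hg : ∀ a : ℕ, ∃ b : ℕ, a ∈ X → (b ∈ X ∧ a < b ∧ b ≤ a + d) := by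
    intro a
    by_cases ha : a ∈ X
    · obtain ⟨y, hy, h1, h2⟩ := hsyn a ha
      exact ⟨y, fun _ => ⟨hy, h1, h2⟩⟩
    · exact ⟨0, fun h => absurd h ha⟩
  choose g hgspec using hg
  refine ⟨hX1, n * d, ?_⟩
  intro x hx
  have hxX : x ∈ X := by rw [hpart]; exact Or.inr hx
  have hPex : ∃ m, m ∈ X₁ ∧ x < m := by
    obtain ⟨m, hm, hm2⟩ := hX1.exists_gt x
    exact ⟨m, hm, hm2⟩
  set y := Nat.find hPex with hy_def
  obtain ⟨hyX1, hxy⟩ : y ∈ X₁ ∧ x < y := Nat.find_spec hPex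
  refine ⟨y, hyX1, hxy, ?_⟩
  by_contra hbig
  push_neg at hbig
  -- build a chain of elements of X starting at x with steps ≤ d
  set z : ℕ → ℕ := fun i => g^[i] x with hz_def
  have hz0 : z 0 = x := rfl
  have hzsucc : ∀ i, z (i + 1) = g (z i) := by
    intro i
    simp [hz_def, Function.iterate_succ_apply']
  have hmem : ∀ i, z i ∈ X := by
    intro i
    induction i with
    | zero => exact hxX
    | succ j ih => rw [hzsucc]; exact (hgspec _ ih).1
  have hstep : ∀ i, z i < z (i + 1) ∧ z (i + 1) ≤ z i + d := by
    intro i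
    rw [hzsucc]
    exact ⟨(hgspec _ (hmem i)).2.1, (hgspec _ (hmem i)).2.2⟩
  have hsm : StrictMono z := strictMono_nat_of_lt_succ fun i => (hstep i).1
  have hbd : ∀ i, z i ≤ x + i * d := by
    intro i
    induction i with
    | zero => simp [hz0]
    | succ j ih =>
      calc z (j + 1) ≤ z j + d := (hstep j).2
        _ ≤ x + j * d + d := by omega
        _ = x + (j + 1) * d := by ring
  set H : Finset ℕ := (Finset.Icc 1 n).image z with hH_def
  have hmemH : ∀ i, 1 ≤ i → i ≤ n → z i ∈ H := by
    intro i h1 h2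
    exact Finset.mem_image_of_mem z (Finset.mem_Icc.mpr ⟨h1, h2⟩)
  have hltY : ∀ i, i ≤ n → z i < y := by
    intro i hi
    have : z i ≤ x + i * d := hbd i
    have : i * d ≤ n * d := Nat.mul_le_mul hi le_rfl
    omega
  have hsubX₀ : ∀ a ∈ H, a ∈ X₀ := by
    intro a ha
    obtain ⟨i, hi, rfl⟩ := Finset.mem_image.mp ha
    obtain ⟨hi1, hi2⟩ := Finset.mem_Icc.mp hi
    have hxa : x < z i := by
      have := hsm (show 0 < i by omega)
      rwa [hz0] at this
    have hay : z i < y := hltY i hi2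
    have : z i ∈ X₀ ∪ X₁ := hpart ▸ hmem i
    rcases this with h | h
    · exact h
    · exact absurd ⟨h, hxa⟩ (Nat.find_min hPex hay)
  have hcard : n ≤ H.card := by
    rw [hH_def, Finset.card_image_of_injOn (hsm.injective.injOn), Nat.card_Icc]
    omega
  have hgaps : GapsBdd H d := by
    intro a ha hb
    obtain ⟨b, hbH, hab⟩ := hb
    obtain ⟨i, hi, rfl⟩ := Finset.mem_image.mp ha
    obtain ⟨j, hj, rfl⟩ := Finset.mem_image.mp hbH
    obtain ⟨hi1, hi2⟩ := Finset.mem_Icc.mp hi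
    obtain ⟨hj1, hj2⟩ := Finset.mem_Icc.mp hj
    have hij : i < j := hsm.lt_iff_lt.mp hab
    refine ⟨z (i + 1), hmemH (i + 1) (by omega) (by omega), (hstep i).1, (hstep i).2⟩
  exact hn H hsubX₀ hcard hgaps

/-- Lemma: a 2-partition of a `d`-syndetic set has both parts piecewise `d`-syndetic
or one part syndetic. -/
theorem syndetic_two_partition (X X₀ X₁ : Set ℕ) (d : ℕ)
    (hinf : X.Infinite) (hsyn : SyndWith d X) (hpart : X = X₀ ∪ X₁) :
    (PWSyndWith d X₀ ∧ PWSyndWith d X₁) ∨ Syndetic X₀ ∨ Syndetic X₁ := by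
  classical
  by_cases h0 : X₀.Infinite
  · by_cases h1 : X₁.Infinite
    · by_cases hp0 : PWSyndWith d X₀
      · by_cases hp1 : PWSyndWith d X₁
        · exact Or.inl ⟨hp0, hp1⟩
        · exact Or.inr (Or.inl (not_pw_case X X₁ X₀ d hsyn (by rw [hpart, Set.union_comm]) h0 hp1))
      · exact Or.inr (Or.inr (not_pw_case X X₀ X₁ d hsyn hpart h1 hp0))
    · exact Or.inr (Or.inl (finite_case X X₁ X₀ d hinf hsyn (by rw [hpart, Set.union_comm]) (Set.not_infinite.mp h1)))
  · exact Or.inr (Or.inr (finite_case X X₀ X₁ d hinf hsyn hpart (Set.not_infinite.mp h0)))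
end

section
/- Every piecewise syndetic subset of ℕ contains arbitrarily long arithmetic progressions. -/
/-! Let `N` be a van der Waerden bound for `l`-term progressions and `H ⊆ X` a finite set with
gaps at most `d` containing `m` and some `M ≥ m + N`. Colour each `j ≤ N` by the set of offsets
`k ≤ d` with `m + j + k ∈ H`; no such colour is empty. A monochromatic progression `b + i a` then
has a common offset `k`, which moves it into `H`. Finite van der Waerden follows from Mathlib's
infinite version (a corollary of Hales–Jewett) by compactness: an ultrafilter limit of
counterexample colourings of longer and longer initial segments would be a colouring of `ℕ`
without monochromatic progression of length `l`. -/

open Filter Finset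

theorem exists_bounded_mono_ap (κ : Type*) [Finite κ] (l : ℕ) :
    ∃ N, ∀ C : ℕ → κ, ∃ a > 0, ∃ b, b + l * a ≤ N ∧ ∀ i < l, C (b + i * a) = C b := by
  by_contra! h
  choose C hC using h
  set U := Ultrafilter.of (atTop : Filter ℕ)
  have hlim (j : ℕ) : ∃ v, ∀ᶠ N in (U : Filter ℕ), C N j = v :=
    Ultrafilter.eventually_exists_iff.mp (.of_forall fun N => ⟨_, rfl⟩)
  choose c hc using hlim
  obtain ⟨a, ha, b, v, hv⟩ := Combinatorics.exists_mono_homothetic_copy (range l) c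
  have hagree : ∀ᶠ N in (U : Filter ℕ), ∀ i ∈ range l, C N (a * i + b) = v :=
    (eventually_all_finset _).mpr fun i hi =>
      (hc (a * i + b)).mono fun N hN => by rw [hN, ← hv i hi, smul_eq_mul]
  obtain ⟨N, hN, hbN⟩ :=
    (hagree.and ((eventually_ge_atTop (b + l * a)).filter_mono (Ultrafilter.of_le _))).exists
  obtain ⟨i, hi, hdiff⟩ := hC N a ha b hbN
  have h0 : C N b = v := by simpa using hN 0 (mem_range.mpr (by omega))
  exact hdiff (by rw [h0, ← hN i (mem_range.mpr hi), mul_comm, add_comm])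

theorem GapsBdd.exists_mem_near {H : Finset ℕ} {d : ℕ} (hH : GapsBdd H d) {m M t : ℕ}
    (hm : m ∈ H) (hM : M ∈ H) (hmt : m ≤ t) (htM : t ≤ M) : ∃ h ∈ H, t ≤ h ∧ h ≤ t + d := by
  have hne : (H.filter (· ≤ t)).Nonempty := ⟨m, mem_filter.mpr ⟨hm, hmt⟩⟩
  obtain ⟨hxH, hxt⟩ := mem_filter.mp ((H.filter (· ≤ t)).max'_mem hne)
  set x := (H.filter (· ≤ t)).max' hne
  rcases hxt.lt_or_eq with hxt | hxt
  · obtain ⟨z, hzH, hxz, hzx⟩ := hH x hxH ⟨M, hM, by omega⟩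
    have htz : t < z := by
      by_contra! hzt
      exact hxz.not_ge ((H.filter (· ≤ t)).le_max' z (mem_filter.mpr ⟨hzH, hzt⟩))
    exact ⟨z, hzH, htz.le, by omega⟩
  · exact ⟨x, hxH, hxt.ge, by omega⟩

theorem Finset.exists_add_le_of_lt_card {H : Finset ℕ} {n : ℕ} (hn : n < #H) :
    ∃ m ∈ H, ∃ M ∈ H, m + n ≤ M := by
  have hne : H.Nonempty := card_pos.mp (by omega)
  refine ⟨H.min' hne, H.min'_mem hne, H.max' hne, H.max'_mem hne, ?_⟩
  have hsub : H ⊆ Icc (H.min' hne) (H.max' hne) := fun x hx =>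
    mem_Icc.mpr ⟨H.min'_le x hx, H.le_max' x hx⟩
  have := card_le_card hsub
  rw [Nat.card_Icc] at this
  omega

theorem PWSyndWith.apSet {d : ℕ} {X : Set ℕ} (hX : PWSyndWith d X) : APSet X := by
  intro l
  obtain ⟨N, hN⟩ := exists_bounded_mono_ap (Finset (Fin (d + 1))) l
  obtain ⟨H, hHX, hcard, hgap⟩ := hX (N + 1)
  obtain ⟨m, hm, M, hM, hmM⟩ := exists_add_le_of_lt_card hcard
  set C : ℕ → Finset (Fin (d + 1)) := fun j => univ.filter fun k => m + j + k ∈ H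
  obtain ⟨a, ha, b, hbN, hmono⟩ := hN C
  obtain ⟨h, hh, hbh, hhd⟩ := hgap.exists_mem_near hm hM (t := m + b) (by omega) (by omega)
  set k : Fin (d + 1) := ⟨h - (m + b), by omega⟩
  have hk : k ∈ C b := by
    simpa only [C, k, mem_filter, mem_univ, true_and, Nat.add_sub_cancel' hbh] using hh
  refine ⟨m + b + k, a, ha, fun i hi => hHX _ ?_⟩
  have := (mem_filter.mp ((hmono i hi).symm ▸ hk : k ∈ C (b + i * a))).2
  convert this using 1
  ring

/-- Every piecewise syndetic set contains arbitrarily long arithmetic progressions. -/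
theorem pws_is_AP (X : Set ℕ) (hX : PWSynd X) : APSet X := by
  obtain ⟨d, hd⟩ := hX
  exact hd.apSet
end

section
/- Van der Waerden's theorem (infinite form): for every finite coloring C : ℕ → Fin r, some color class contains arbitrarily long arithmetic progressions. -/
/-- Van der Waerden's theorem, infinite form. -/
theorem van_der_waerden (r : ℕ) (C : ℕ → Fin r) :
    ∃ i : Fin r, APSet {x : ℕ | C x = i} := by
  have key : ∀ l : ℕ, ∃ i : Fin r, ∃ a e : ℕ, 0 < e ∧ ∀ j < l, C (a + j * e) = i := by
    intro l
    obtain ⟨e, he, b, c, hc⟩ :=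
      Combinatorics.exists_mono_homothetic_copy (Finset.range l) C
    refine ⟨c, b, e, he, fun j hj => ?_⟩
    have := hc j (Finset.mem_range.2 hj)
    simpa [smul_eq_mul, mul_comm, add_comm] using this
  choose f a e he hf using key
  obtain ⟨i, hi⟩ := Finite.exists_infinite_fiber f
  refine ⟨i, fun l => ?_⟩
  have hinf : (f ⁻¹' {i}).Infinite := Set.infinite_coe_iff.mp hi
  obtain ⟨l', hl'mem, hl'⟩ := hinf.exists_gt l
  refine ⟨a l', e l', he l', fun j hj => ?_⟩
  have : C (a l' + j * e l') = f l' := hf l' j (hj.trans hl')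
  simpa [Set.mem_setOf_eq, this] using hl'mem
end

section
/- Finite Brown's lemma: for every function f : ℕ → ℕ and every r > 0 there exists n such that every coloring C : {0,…,n−1} → Fin r has a monochromatic set H with |H| > f(gs(H)). -/
lemma gapsBdd_image (H : Finset ℕ) (a d : ℕ) :
    GapsBdd (H.image (a + ·)) d ↔ GapsBdd H d := by
  constructor
  · intro h x hx ⟨y, hy, hxy⟩
    obtain ⟨z, hz, hz1, hz2⟩ := h (a + x) (Finset.mem_image_of_mem _ hx)
      ⟨a + y, Finset.mem_image_of_mem _ hy, by omega⟩
    obtain ⟨z', hz', rfl⟩ := Finset.mem_image.mp hz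
    exact ⟨z', hz', by omega, by omega⟩
  · intro h x hx ⟨y, hy, hxy⟩
    obtain ⟨x', hx', rfl⟩ := Finset.mem_image.mp hx
    obtain ⟨y', hy', rfl⟩ := Finset.mem_image.mp hy
    have hxy' : a + x' < a + y' := hxy
    obtain ⟨z, hz, hz1, hz2⟩ := h x' hx' ⟨y', hy', by omega⟩
    exact ⟨a + z, Finset.mem_image_of_mem _ hz, by omega, by omega⟩

lemma gapSize_image (H : Finset ℕ) (a : ℕ) :
    gapSize (H.image (a + ·)) = gapSize H := by
  have hinj : Function.Injective (a + ·) := add_right_injective a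
  have hset : {d | GapsBdd (H.image (a + ·)) d} = {d | GapsBdd H d} := by
    ext d; exact gapsBdd_image H a d
  unfold gapSize
  rw [Finset.card_image_of_injective _ hinj, hset]

lemma gapSize_le {H : Finset ℕ} {d : ℕ} (hd : 1 ≤ d) (h : GapsBdd H d) :
    gapSize H ≤ d := by
  unfold gapSize
  split
  · exact hd
  · exact Nat.sInf_le h

lemma brown_aux_s11 (r : ℕ) (f : ℕ → ℕ) :
    ∃ n : ℕ, 0 < n ∧ ∀ C : ℕ → Fin r, ∃ H : Finset ℕ,
      (∀ x ∈ H, x < n) ∧ (∀ x ∈ H, ∀ y ∈ H, C x = C y) ∧ f (gapSize H) < H.card := by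
  induction r with
  | zero => exact ⟨1, Nat.one_pos, fun C => (C 0).elim0⟩
  | succ r ih =>
    obtain ⟨n, hn, ihn⟩ := ih
    set M := (Finset.range (n + 1)).sup f with hM
    refine ⟨n * (M + 1), by positivity, fun C => ?_⟩
    by_cases hcase : ∃ a, a + n ≤ n * (M + 1) ∧
        ∀ m, a ≤ m → m < a + n → C m ≠ Fin.last r
    · obtain ⟨a, ha, havoid⟩ := hcase
      have hvlt : ∀ m, a ≤ m → m < a + n → (C m : ℕ) < r := by
        intro m h1 h2
        have := havoid m h1 h2
        have hle : (C m : ℕ) < r + 1 := (C m).isLt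
        have : (C m : ℕ) ≠ r := fun h => this (Fin.ext h)
        omega
      have hrpos : 0 < r := by
        have := hvlt a le_rfl (by omega)
        omega
      set C' : ℕ → Fin r := fun x => ⟨min (C (a + x) : ℕ) (r - 1), by omega⟩ with hC'
      obtain ⟨H', hlt', hmono', hcard'⟩ := ihn C'
      refine ⟨H'.image (a + ·), ?_, ?_, ?_⟩
      · intro x hx
        obtain ⟨x', hx', rfl⟩ := Finset.mem_image.mp hx
        have := hlt' x' hx'
        show a + x' < n * (M + 1)
        omega
      · intro x hx y hy
        obtain ⟨x', hx', rfl⟩ := Finset.mem_image.mp hx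
        obtain ⟨y', hy', rfl⟩ := Finset.mem_image.mp hy
        have h1 := hvlt (a + x') (by omega) (by have := hlt' x' hx'; omega)
        have h2 := hvlt (a + y') (by omega) (by have := hlt' y' hy'; omega)
        have := hmono' x' hx' y' hy'
        have hval : (C' x' : ℕ) = (C' y' : ℕ) := by rw [this]
        simp only [hC'] at hval
        exact Fin.ext (by omega)
      · rw [gapSize_image,
          Finset.card_image_of_injective _ (add_right_injective a)]
        exact hcard'
    · push_neg at hcase
      set H : Finset ℕ := (Finset.range (n * (M + 1))).filter (fun x => C x = Fin.last r)
        with hH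
      have hmemH : ∀ x, x ∈ H ↔ x < n * (M + 1) ∧ C x = Fin.last r := by
        intro x
        simp [hH, Finset.mem_filter, Finset.mem_range]
      have hgaps : GapsBdd H n := by
        intro x hx ⟨y, hy, hxy⟩
        rcases le_or_gt (n * (M + 1)) (x + n) with hle | hlt
        · exact ⟨y, hy, hxy, by have := (hmemH y).mp hy; omega⟩
        · obtain ⟨m, hm1, hm2, hm3⟩ := hcase (x + 1) (by omega)
          exact ⟨m, (hmemH m).mpr ⟨by omega, hm3⟩, by omega, by omega⟩
      have hgs : gapSize H ≤ n := gapSize_le hn hgaps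
      have hfle : f (gapSize H) ≤ M :=
        Finset.le_sup (Finset.mem_range.mpr (by omega))
      -- lower bound on card
      have hchoose : ∀ k, k < M + 1 → ∃ m, k * n ≤ m ∧ m < k * n + n ∧ C m = Fin.last r := by
        intro k hk
        have : k * n + n ≤ n * (M + 1) := by
          have : (k + 1) * n ≤ (M + 1) * n := Nat.mul_le_mul_right n (by omega)
          calc k * n + n = (k + 1) * n := by ring
            _ ≤ (M + 1) * n := this
            _ = n * (M + 1) := Nat.mul_comm _ _
        exact hcase (k * n) this
      classical
      set g : ℕ → ℕ := fun k => if h : k < M + 1 then (hchoose k h).choose else 0 with hg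
      have hgspec : ∀ k, k < M + 1 →
          k * n ≤ g k ∧ g k < k * n + n ∧ C (g k) = Fin.last r := by
        intro k hk
        simp only [hg, dif_pos hk]
        exact (hchoose k hk).choose_spec
      have hcardle : M + 1 ≤ H.card := by
        have := Finset.card_le_card_of_injOn (s := Finset.range (M + 1)) (t := H) g
          (fun k hk => by
            have hk' := Finset.mem_range.mp hk
            obtain ⟨h1, h2, h3⟩ := hgspec k hk'
            refine (hmemH (g k)).mpr ⟨?_, h3⟩
            have : k * n + n ≤ n * (M + 1) := by
              calc k * n + n = (k + 1) * n := by ring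
                _ ≤ (M + 1) * n := Nat.mul_le_mul_right n (by omega)
                _ = n * (M + 1) := Nat.mul_comm _ _
            omega)
          (fun k hk j hj hkj => by
            simp only [Finset.coe_range, Set.mem_Iio] at hk hj
            obtain ⟨hk1, hk2, _⟩ := hgspec k hk
            obtain ⟨hj1, hj2, _⟩ := hgspec j hj
            by_contra hne
            rcases Nat.lt_or_ge k j with h | h
            · have : k * n + n ≤ j * n := by
                calc k * n + n = (k + 1) * n := by ring
                  _ ≤ j * n := Nat.mul_le_mul_right n (by omega)
              omega
            · have hlt : j < k := by omega
              have : j * n + n ≤ k * n := by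
                calc j * n + n = (j + 1) * n := by ring
                  _ ≤ k * n := Nat.mul_le_mul_right n (by omega)
              omega)
        simpa using this
      exact ⟨H, fun x hx => ((hmemH x).mp hx).1, fun x hx y hy => by
        rw [((hmemH x).mp hx).2, ((hmemH y).mp hy).2], by omega⟩

/-- Finite Brown's lemma. -/
theorem finite_brown (f : ℕ → ℕ) (r : ℕ) (hr : 0 < r) :
    ∃ n : ℕ, ∀ C : ℕ → Fin r, ∃ H : Finset ℕ,
      (∀ x ∈ H, x < n) ∧ (∀ x ∈ H, ∀ y ∈ H, C x = C y) ∧ f (gapSize H) < H.card := by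
  obtain ⟨n, -, h⟩ := brown_aux_s11 r f
  exact ⟨n, h⟩
end

section
/- The infinite Brown's lemma implies the finite Brown's lemma: assuming that every finite coloring of ℕ has a monochromatic piecewise syndetic set, for every f : ℕ → ℕ and every r > 0 there exists n such that every r-coloring of {0,…,n−1} has a monochromatic set H with |H| > f(gs(H)). (This is a compactness/König's lemma argument.) -/
/-!
Suppose that for some `f` and `r` every `n` admits a bad `r`-colouring `D n` of `{0, …, n-1}`.
Along an ultrafilter finer than `atTop` the colourings `D n` converge pointwise to a colouring `C`
of `ℕ`. By the infinite Brown lemma some colour class of `C` is piecewise `d`-syndetic, so it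
contains a finite `H` with gaps at most `d` and more than `max_{e ≤ d} f e` elements. Any finite
window of `C` is copied by infinitely many `D n`, in particular by one with `n` beyond `H`, and
then `H` is monochromatic for `D n`: a contradiction.
-/

open Filter

theorem Ultrafilter.exists_forall_eventually_eq {ι β α : Type*} [Finite α] (U : Ultrafilter ι)
    (D : ι → β → α) : ∃ C : β → α, ∀ x, ∀ᶠ n in U, D n x = C x := by
  choose C hC using fun x => (Ultrafilter.eventually_exists_iff (P := fun a n => D n x = a)).mp
    (Eventually.of_forall fun n => ⟨D n x, rfl⟩)
  exact ⟨C, hC⟩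

theorem exists_limit_coloring {β α : Type*} [Finite α] (D : ℕ → β → α) :
    ∃ C : β → α, ∀ s : Finset β, ∃ᶠ n in atTop, ∀ x ∈ s, D n x = C x := by
  obtain ⟨C, hC⟩ := (Ultrafilter.of (atTop : Filter ℕ)).exists_forall_eventually_eq D
  exact ⟨C, fun s => ((eventually_all_finset s).mpr fun x _ => hC x).frequently.filter_mono
    (Ultrafilter.of_le _)⟩

theorem gapSize_le_of_gapsBdd {H : Finset ℕ} {d : ℕ} (hH : 2 ≤ H.card) (hd : GapsBdd H d) :
    gapSize H ≤ d := by
  rw [gapSize, if_neg (by omega)]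
  exact Nat.sInf_le hd

theorem PWSyndWith.exists_finset_lt_card {d : ℕ} {X : Set ℕ} (hX : PWSyndWith d X) (f : ℕ → ℕ) :
    ∃ H : Finset ℕ, (∀ x ∈ H, x ∈ X) ∧ f (gapSize H) < H.card := by
  obtain ⟨H, hHX, hcard, hgaps⟩ := hX ((Finset.range (d + 1)).sup f + 2)
  have hgs : gapSize H ≤ d := gapSize_le_of_gapsBdd (by omega) hgaps
  have hf : f (gapSize H) ≤ (Finset.range (d + 1)).sup f :=
    Finset.le_sup (Finset.mem_range.mpr (by omega))
  exact ⟨H, hHX, by omega⟩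

/-- The infinite Brown's lemma implies the finite Brown's lemma. -/
theorem infinite_to_finite_brown
    (hBrown : ∀ (r : ℕ) (C : ℕ → Fin r), ∃ i : Fin r, PWSynd {x : ℕ | C x = i}) :
    ∀ (f : ℕ → ℕ) (r : ℕ), 0 < r →
      ∃ n : ℕ, ∀ C : ℕ → Fin r, ∃ H : Finset ℕ,
        (∀ x ∈ H, x < n) ∧ (∀ x ∈ H, ∀ y ∈ H, C x = C y) ∧ f (gapSize H) < H.card := by
  intro f r _
  by_contra! hbad
  choose D hD using hbad
  obtain ⟨C, hC⟩ := exists_limit_coloring D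
  obtain ⟨i, d, hsynd⟩ := hBrown r C
  obtain ⟨H, hHi, hH⟩ := hsynd.exists_finset_lt_card f
  obtain ⟨n, hn, hDC⟩ := (hC H).forall_exists_of_atTop (H.sup id + 1)
  have hHn : ∀ x ∈ H, x < n := fun x hx => by
    have : x ≤ H.sup id := Finset.le_sup (f := id) hx
    omega
  have hmono : ∀ x ∈ H, ∀ y ∈ H, D n x = D n y := fun x hx y hy => by
    rw [hDC x hx, hDC y hy, hHi x hx, hHi y hy]
  exact (hD n H hHn hmono).not_gt hH
end

section
/- Inductive bound for finite Brown numbers: let f : ℕ → ℕ be nondecreasing. Define n₁ = f(1)+2 and n_{r+1} = (r+1)·f(n_r)+1. Then for every r ≥ 1, every coloring C : {0,…,n_r − 1} → Fin r has a monochromatic set H with |H| > f(gs(H)). -/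
lemma gapSize_le_of_gapsBdd_s13 {H : Finset ℕ} {m : ℕ} (hm : 1 ≤ m) (h : GapsBdd H m) :
    gapSize H ≤ m := by
  unfold gapSize
  split_ifs with h1
  · exact hm
  · exact Nat.sInf_le h

lemma gapsBdd_image_add (a d : ℕ) (H : Finset ℕ) :
    GapsBdd (H.image (a + ·)) d ↔ GapsBdd H d := by
  constructor
  · rintro h x hx ⟨y, hy, hxy⟩
    obtain ⟨z, hz, h1, h2⟩ := h (a + x) (Finset.mem_image_of_mem _ hx)
      ⟨a + y, Finset.mem_image_of_mem _ hy, by omega⟩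
    obtain ⟨z', hz', rfl⟩ := Finset.mem_image.mp hz
    exact ⟨z', hz', by omega, by omega⟩
  · rintro h x hx ⟨y, hy, hxy⟩
    obtain ⟨x', hx', rfl⟩ := Finset.mem_image.mp hx
    obtain ⟨y', hy', rfl⟩ := Finset.mem_image.mp hy
    obtain ⟨z, hz, h1, h2⟩ := h x' hx' ⟨y', hy', by omega⟩
    exact ⟨a + z, Finset.mem_image_of_mem _ hz, by omega, by omega⟩

lemma gapSize_image_add (a : ℕ) (H : Finset ℕ) :
    gapSize (H.image (a + ·)) = gapSize H := by
  have hs : {d | GapsBdd (H.image (a + ·)) d} = {d | GapsBdd H d} :=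
    Set.ext fun d => gapsBdd_image_add a d H
  unfold gapSize
  rw [Finset.card_image_of_injective _ (add_right_injective a), hs]

/-- Inductive bound for finite Brown numbers. -/
theorem finite_brown_bound (f : ℕ → ℕ) (hf : Monotone f) (n : ℕ → ℕ)
    (h1 : n 1 = f 1 + 2) (hrec : ∀ r, 1 ≤ r → n (r + 1) = (r + 1) * f (n r) + 1) :
    ∀ r, 1 ≤ r → ∀ C : ℕ → Fin r, ∃ H : Finset ℕ,
      (∀ x ∈ H, x < n r) ∧ (∀ x ∈ H, ∀ y ∈ H, C x = C y) ∧ f (gapSize H) < H.card := by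
  have hn : ∀ r, 1 ≤ r → 1 ≤ n r := by
    intro r hr
    rcases Nat.lt_or_ge r 2 with h | h
    · have hr1 : r = 1 := by omega
      subst hr1; omega
    · obtain ⟨s, rfl⟩ : ∃ s, r = s + 1 := ⟨r - 1, by omega⟩
      rw [hrec s (by omega)]; omega
  intro r hr
  induction r, hr using Nat.le_induction with
  | base =>
    intro C
    refine ⟨Finset.range (f 1 + 2), ?_, ?_, ?_⟩
    · intro x hx; rw [h1]; simpa using hx
    · intro x _ y _; exact Subsingleton.elim _ _
    · have hb : GapsBdd (Finset.range (f 1 + 2)) 1 := by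
        rintro x hx ⟨y, hy, hxy⟩
        refine ⟨x + 1, ?_, by omega, by omega⟩
        simp only [Finset.mem_range] at *
        omega
      have hle := gapSize_le_of_gapsBdd_s13 le_rfl hb
      have := hf hle
      rw [Finset.card_range]
      omega
  | succ r hr IH =>
    intro C
    have hN : n (r + 1) = (r + 1) * f (n r) + 1 := hrec r hr
    have hpig : ∃ i : Fin (r + 1),
        f (n r) < ((Finset.range (n (r+1))).filter (fun x => C x = i)).card := by
      obtain ⟨y, _, hy⟩ := Finset.exists_lt_card_fiber_of_mul_lt_card_of_maps_to
        (s := Finset.range (n (r+1))) (t := (Finset.univ : Finset (Fin (r+1)))) (f := C)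
        (n := f (n r))
        (fun a _ => Finset.mem_univ _) (by
          rw [Finset.card_range, Finset.card_univ, Fintype.card_fin, hN]; omega)
      exact ⟨y, hy⟩
    obtain ⟨i, hX⟩ := hpig
    set X := (Finset.range (n (r+1))).filter (fun x => C x = i) with hXdef
    by_cases hcase : ∃ a, a + n r ≤ n (r+1) ∧ ∀ t < n r, C (a + t) ≠ i
    · obtain ⟨a, ha, hmiss⟩ := hcase
      set C' : ℕ → Fin r := fun t =>
        if h : (C (a + t)).val < i.val then ⟨(C (a+t)).val, by have := i.isLt; omega⟩
        else ⟨(C (a+t)).val - 1, by have := (C (a+t)).isLt; omega⟩ with hC'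
      have hinj : ∀ x y, C (a+x) ≠ i → C (a+y) ≠ i → C' x = C' y → C (a+x) = C (a+y) := by
        intro x y hx hy hxy
        have hx' : (C (a+x)).val ≠ i.val := fun h => hx (Fin.ext h)
        have hy' : (C (a+y)).val ≠ i.val := fun h => hy (Fin.ext h)
        have hval : (C' x).val = (C' y).val := by rw [hxy]
        simp only [hC'] at hval
        split_ifs at hval <;> (apply Fin.ext; simp only [Fin.val_mk] at hval; omega)
      obtain ⟨H', hH'lt, hH'mono, hH'card⟩ := IH C'
      refine ⟨H'.image (a + ·), ?_, ?_, ?_⟩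
      · intro x hx
        obtain ⟨x', hx', rfl⟩ := Finset.mem_image.mp hx
        have := hH'lt x' hx'
        omega
      · intro x hx y hy
        obtain ⟨x', hx', rfl⟩ := Finset.mem_image.mp hx
        obtain ⟨y', hy', rfl⟩ := Finset.mem_image.mp hy
        exact hinj x' y' (hmiss x' (hH'lt x' hx')) (hmiss y' (hH'lt y' hy'))
          (hH'mono x' hx' y' hy')
      · rw [gapSize_image_add, Finset.card_image_of_injective _ (add_right_injective a)]
        exact hH'card
    · push_neg at hcase
      refine ⟨X, ?_, ?_, ?_⟩
      · intro x hx
        exact Finset.mem_range.mp (Finset.mem_filter.mp hx).1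
      · intro x hx y hy
        have h1 : C x = i := (Finset.mem_filter.mp hx).2
        have h2 : C y = i := (Finset.mem_filter.mp hy).2
        rw [h1, h2]
      · have hgb : GapsBdd X (n r) := by
          rintro x hx ⟨y, hy, hxy⟩
          have hxN : x < n (r+1) := Finset.mem_range.mp (Finset.mem_filter.mp hx).1
          have hyN : y < n (r+1) := Finset.mem_range.mp (Finset.mem_filter.mp hy).1
          by_cases hwin : x + 1 + n r ≤ n (r+1)
          · obtain ⟨t, ht, hct⟩ := hcase (x+1) hwin
            exact ⟨x + 1 + t,
              Finset.mem_filter.mpr ⟨Finset.mem_range.mpr (by omega), hct⟩, by omega, by omega⟩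
          · exact ⟨y, hy, hxy, by omega⟩
        have hle := gapSize_le_of_gapsBdd_s13 (hn r hr) hgb
        have := hf hle
        omega
end

section
/- Recursive construction of bad colorings for finite Brown: define n_0 = 2 with C_0 the constant 0 coloring of {0,1}, and n_{s+1} = 2·n_s·2^{n_s} with C_{s+1} : {0,…,n_{s+1}−1} → Fin 2^{s+1} obtained by concatenating C_s D_s repeated 2^{n_s} times (D_s a copy of C_s with colors shifted by 2^s). Then for all s and all i < 2^s, the color class H_{i,s} = {x < n_s : C_s(x) = i} has cardinality n_s / 2^s, and every interval I of H_{i,s} satisfies |I| ≤ 2^{gs(I)}. -/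
/-- `I` is an interval of `H`: a block of consecutive elements of `H`. -/
def IsIntervalOf (I H : Finset ℕ) : Prop :=
  I ⊆ H ∧ ∀ x ∈ I, ∀ y ∈ I, ∀ z ∈ H, x < z → z < y → z ∈ I

/-- The lengths `n_s`: `n_0 = 2`, `n_{s+1} = 2 · n_s · 2^{n_s}`. -/
def nseq : ℕ → ℕ
  | 0 => 2
  | s + 1 => 2 * nseq s * 2 ^ nseq s

/-- The colorings `C_s : ℕ → {0,…,2^s−1}`: `C_0` is constantly `0`, and
`C_{s+1}` is `C_s D_s` repeated, where `D_s` is `C_s` with colors shifted by `2^s`. -/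
def Cseq : ℕ → ℕ → ℕ
  | 0, _ => 0
  | s + 1, x =>
    if x % (2 * nseq s) < nseq s then Cseq s (x % (2 * nseq s))
    else Cseq s (x % (2 * nseq s) - nseq s) + 2 ^ s

namespace BCaux

lemma gapsBdd_of_bdd (I : Finset ℕ) (d : ℕ) (h : ∀ x ∈ I, x ≤ d) : GapsBdd I d := by
  intro x hx hex
  obtain ⟨y, hy, hxy⟩ := hex
  exact ⟨y, hy, hxy, by have := h y hy; omega⟩

lemma gapsBdd_sup (I : Finset ℕ) : GapsBdd I (I.sup id) :=
  gapsBdd_of_bdd _ _ (fun x hx => Finset.le_sup (f := id) hx)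

lemma one_le_gapSize (I : Finset ℕ) : 1 ≤ gapSize I := by
  rw [gapSize]
  split
  · exact le_refl 1
  · rename_i hcard
    push_neg at hcard
    refine le_csInf ⟨_, gapsBdd_sup I⟩ ?_
    intro d hd
    simp only [Set.mem_setOf_eq] at hd
    by_contra hc
    push_neg at hc
    obtain ⟨u, hu, v, hv, huv⟩ := Finset.one_lt_card.mp hcard
    have hne : I.Nonempty := ⟨u, hu⟩
    have hmu := I.min'_le u hu
    have hmv := I.min'_le v hv
    have hy : ∃ y ∈ I, I.min' hne < y := by
      rcases Nat.lt_or_ge (I.min' hne) u with h' | h'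
      · exact ⟨u, hu, h'⟩
      · exact ⟨v, hv, by omega⟩
    obtain ⟨z, hz, h1, h2⟩ := hd (I.min' hne) (I.min'_mem hne) hy
    omega

lemma card_le_pow_gapSize_of_le_two (I : Finset ℕ) (h : I.card ≤ 2) :
    I.card ≤ 2 ^ gapSize I := by
  have h1 := one_le_gapSize I
  calc I.card ≤ 2 := h
    _ = 2 ^ 1 := rfl
    _ ≤ 2 ^ gapSize I := Nat.pow_le_pow_right (by norm_num) h1

lemma gapsBdd_image_sub (I : Finset ℕ) (t d : ℕ) (ht : ∀ z ∈ I, t ≤ z) :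
    GapsBdd (I.image (fun z => z - t)) d ↔ GapsBdd I d := by
  constructor
  · intro hg x hx hex
    obtain ⟨y, hy, hxy⟩ := hex
    have hx' := Finset.mem_image_of_mem (fun z => z - t) hx
    have hy' := Finset.mem_image_of_mem (fun z => z - t) hy
    obtain ⟨z', hz', h1, h2⟩ := hg (x - t) hx'
      ⟨y - t, hy', by have := ht x hx; have := ht y hy; omega⟩
    obtain ⟨z, hz, rfl⟩ := Finset.mem_image.mp hz'
    exact ⟨z, hz, by have := ht z hz; have := ht x hx; omega,
      by have := ht z hz; have := ht x hx; omega⟩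
  · intro hg x' hx' hex
    obtain ⟨y', hy', hxy⟩ := hex
    obtain ⟨x, hx, rfl⟩ := Finset.mem_image.mp hx'
    obtain ⟨y, hy, rfl⟩ := Finset.mem_image.mp hy'
    obtain ⟨z, hz, h1, h2⟩ := hg x hx ⟨y, hy, by have := ht x hx; have := ht y hy; omega⟩
    exact ⟨z - t, Finset.mem_image_of_mem _ hz, by have := ht x hx; omega,
      by have := ht x hx; omega⟩

lemma gapSize_image_sub (I : Finset ℕ) (t : ℕ) (ht : ∀ z ∈ I, t ≤ z) :
    gapSize (I.image (fun z => z - t)) = gapSize I := by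
  have hcard : (I.image (fun z => z - t)).card = I.card :=
    Finset.card_image_of_injOn (fun a ha b hb hab => by
      have := ht a ha; have := ht b hb; omega)
  have hset : {d | GapsBdd (I.image (fun z => z - t)) d} = {d | GapsBdd I d} :=
    Set.ext fun d => gapsBdd_image_sub I t d ht
  rw [gapSize, gapSize, hcard, hset]

end BCaux

namespace BCaux

lemma step (H' H : Finset ℕ) (n K o c D : ℕ)
    (hn : 0 < n) (ho : o = 0 ∨ o = n)
    (hmem : ∀ x, x ∈ H ↔ x < 2*n*K ∧ o ≤ x % (2*n) ∧ x % (2*n) - o ∈ H')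
    (hsub : ∀ h ∈ H', h < n)
    (hcard : H'.card = c)
    (hdiam : ∀ x ∈ H', ∀ y ∈ H', y ≤ x + D)
    (hint : ∀ I : Finset ℕ, IsIntervalOf I H' → I.card ≤ 2 ^ gapSize I)
    (hineq : K * c ≤ 2 ^ (2*n - D)) :
    H.card = K * c ∧ (∀ x ∈ H, ∀ y ∈ H, y ≤ x + (2*n*(K-1) + D)) ∧
      ∀ I : Finset ℕ, IsIntervalOf I H → I.card ≤ 2 ^ gapSize I := by
  have ho' : o ≤ n := by rcases ho with rfl | rfl <;> omega
  have hdec : ∀ x ∈ H, o ≤ x % (2*n) ∧ x % (2*n) - o ∈ H' ∧ x / (2*n) < K ∧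
      x = 2*n*(x/(2*n)) + o + (x % (2*n) - o) := by
    intro x hx
    obtain ⟨h1, h2, h3⟩ := (hmem x).mp hx
    have e := Nat.div_add_mod x (2*n)
    have hh := hsub _ h3
    refine ⟨h2, h3, ?_, by omega⟩
    by_contra hc
    push_neg at hc
    have := Nat.mul_le_mul_left (2*n) hc
    omega
  have hcomp : ∀ k h, k < K → h ∈ H' → 2*n*k + o + h ∈ H := by
    intro k h hk hh
    have hhn := hsub _ hh
    rw [hmem]
    have e1 : 2*n*k + o + h = 2*n*k + (o + h) := by omega
    have e2 : (2*n*k + (o + h)) % (2*n) = o + h := by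
      rw [Nat.mul_add_mod]; exact Nat.mod_eq_of_lt (by omega)
    have hk' : k + 1 ≤ K := hk
    have hmul := Nat.mul_le_mul_left (2*n) hk'
    have e4 : 2*n*(k+1) = 2*n*k + 2*n := by ring
    refine ⟨by omega, ?_, ?_⟩
    · rw [e1, e2]; omega
    · rw [e1, e2]
      have : o + h - o = h := by omega
      rw [this]; exact hh
  have hcardH : H.card = K * c := by
    rw [← hcard, ← Finset.card_range K, ← Finset.card_product]
    apply Finset.card_bij (fun x _ => (x / (2*n), x % (2*n) - o))
    · intro x hx
      obtain ⟨_, h1, h2, _⟩ := hdec x hx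
      exact Finset.mem_product.mpr ⟨Finset.mem_range.mpr h2, h1⟩
    · intro a ha b hb hab
      obtain ⟨_, _, _, ea⟩ := hdec a ha
      obtain ⟨_, _, _, eb⟩ := hdec b hb
      simp only [Prod.mk.injEq] at hab
      obtain ⟨h1, h2⟩ := hab
      rw [ea, eb, h1, h2]
    · rintro ⟨k, h⟩ hp
      obtain ⟨hk, hh⟩ := Finset.mem_product.mp hp
      rw [Finset.mem_range] at hk
      refine ⟨2*n*k + o + h, hcomp k h hk hh, ?_⟩
      have hhn := hsub _ hh
      have e0 : 2*n*k + o + h = 2*n*k + (o + h) := by omega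
      rw [e0]
      have emod : (2*n*k + (o + h)) % (2*n) = o + h := by
        rw [Nat.mul_add_mod]; exact Nat.mod_eq_of_lt (by omega)
      have ediv : (2*n*k + (o + h)) / (2*n) = k := by
        rw [Nat.mul_add_div (by omega)]
        simp [Nat.div_eq_of_lt (show o + h < 2*n by omega)]
      rw [emod, ediv]
      simp
  have hdiamH : ∀ x ∈ H, ∀ y ∈ H, y ≤ x + (2*n*(K-1) + D) := by
    intro x hx y hy
    obtain ⟨hx0, hx1, hx2, ex⟩ := hdec x hx
    obtain ⟨hy0, hy1, hy2, ey⟩ := hdec y hy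
    have hd := hdiam _ hx1 _ hy1
    have hky : y/(2*n) ≤ K - 1 := by omega
    have h1 := Nat.mul_le_mul_left (2*n) hky
    omega
  refine ⟨hcardH, hdiamH, ?_⟩
  intro I hI
  obtain ⟨hIsub, hIint⟩ := hI
  by_cases hone : ∀ z ∈ I, ∀ w ∈ I, z / (2*n) = w / (2*n)
  · rcases I.eq_empty_or_nonempty with rfl | hne
    · simp
    · have hmI : I.min' hne ∈ I := I.min'_mem hne
      set k0 := I.min' hne / (2*n) with hk0
      set t := 2*n*k0 + o with htdef
      have hblock : ∀ z ∈ I, t ≤ z ∧ z - t ∈ H' := by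
        intro z hz
        obtain ⟨h0, h1, h2, e⟩ := hdec z (hIsub hz)
        have hk : z / (2*n) = k0 := hone z hz _ hmI
        rw [hk] at e
        refine ⟨by omega, ?_⟩
        have : z - t = z % (2*n) - o := by omega
        rw [this]; exact h1
      set I' := I.image (fun z => z - t) with hI'
      have hcardI' : I'.card = I.card := Finset.card_image_of_injOn
        (fun a ha b hb hab => by
          have := (hblock a ha).1; have := (hblock b hb).1; omega)
      have hk0K : k0 < K := by
        obtain ⟨_, _, h2, _⟩ := hdec _ (hIsub hmI)
        rw [← hk0] at h2
        exact h2
      have hInt' : IsIntervalOf I' H' := by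
        constructor
        · intro z' hz'
          obtain ⟨z, hz, rfl⟩ := Finset.mem_image.mp hz'
          exact (hblock z hz).2
        · intro a' ha' b' hb' w hw haw hwb
          obtain ⟨a, ha, rfl⟩ := Finset.mem_image.mp ha'
          obtain ⟨b, hb, rfl⟩ := Finset.mem_image.mp hb'
          have hwH : t + w ∈ H := by
            have h := hcomp k0 w hk0K hw
            have e : 2*n*k0 + o + w = t + w := by omega
            rwa [e] at h
          have hta := (hblock a ha).1
          have htb := (hblock b hb).1
          have h1 : a < t + w := by omega
          have h2 : t + w < b := by omega
          have hm := hIint a ha b hb (t + w) hwH h1 h2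
          have e2 : w = (t + w) - t := by omega
          rw [e2]; exact Finset.mem_image_of_mem _ hm
      have hgsI : gapSize I' = gapSize I :=
        gapSize_image_sub I t (fun z hz => (hblock z hz).1)
      calc I.card = I'.card := hcardI'.symm
        _ ≤ 2 ^ gapSize I' := hint I' hInt'
        _ = 2 ^ gapSize I := by rw [hgsI]
  · push_neg at hone
    obtain ⟨x0, hx0, w0, hw0, hxw⟩ := hone
    have h2card : 1 < I.card :=
      Finset.one_lt_card.mpr ⟨x0, hx0, w0, hw0, fun h => hxw (by rw [h])⟩
    have hne : I.Nonempty := Finset.card_pos.mp (by omega)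
    have hgs : 2*n - D ≤ gapSize I := by
      rw [gapSize, if_neg (by omega)]
      refine le_csInf ⟨_, gapsBdd_sup I⟩ ?_
      intro d hd
      simp only [Set.mem_setOf_eq] at hd
      have hmI : I.min' hne ∈ I := I.min'_mem hne
      set kmin := I.min' hne / (2*n) with hkm
      have hw : ∃ w ∈ I, w / (2*n) ≠ kmin := by
        by_cases hxk : x0 / (2*n) = kmin
        · exact ⟨w0, hw0, by rw [← hxk]; exact fun hc => hxw hc.symm⟩
        · exact ⟨x0, hx0, hxk⟩
      obtain ⟨w, hwI, hwk⟩ := hw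
      have hmw := I.min'_le w hwI
      have hkw : kmin ≤ w / (2*n) := by rw [hkm]; exact Nat.div_le_div_right hmw
      set T := I.filter (fun z => z / (2*n) = kmin) with hT
      have hmT : I.min' hne ∈ T := Finset.mem_filter.mpr ⟨hmI, by rw [hkm]⟩
      have hTne : T.Nonempty := ⟨_, hmT⟩
      have huT : T.max' hTne ∈ T := T.max'_mem hTne
      set u := T.max' hTne with hu
      have huI : u ∈ I := (Finset.mem_filter.mp huT).1
      have huk : u / (2*n) = kmin := (Finset.mem_filter.mp huT).2
      have huw : u < w := by
        by_contra hc
        push_neg at hc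
        have := Nat.div_le_div_right (c := 2*n) hc
        omega
      obtain ⟨z, hzI, huz, hzd⟩ := hd u huI ⟨w, hwI, huw⟩
      have hzk : z / (2*n) ≠ kmin := by
        intro hc
        have hzT : z ∈ T := Finset.mem_filter.mpr ⟨hzI, hc⟩
        have := T.le_max' z hzT
        omega
      have hmz := I.min'_le z hzI
      have hkz : kmin ≤ z / (2*n) := by rw [hkm]; exact Nat.div_le_div_right hmz
      have hkz' : kmin + 1 ≤ z / (2*n) := by omega
      obtain ⟨hz0, hz1, hz2, ez⟩ := hdec z (hIsub hzI)
      obtain ⟨hu0, hu1, hu2, eu⟩ := hdec u (hIsub huI)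
      rw [huk] at eu
      have hd2 := hdiam _ hz1 _ hu1
      have hmul := Nat.mul_le_mul_left (2*n) hkz'
      have hmul2 : 2*n*(kmin+1) = 2*n*kmin + 2*n := by ring
      omega
    have hcardI : I.card ≤ K * c := hcardH ▸ Finset.card_le_card hIsub
    calc I.card ≤ K*c := hcardI
      _ ≤ 2^(2*n - D) := hineq
      _ ≤ 2^gapSize I := Nat.pow_le_pow_right (by norm_num) hgs

end BCaux

namespace BCaux

lemma cseq_lt (s : ℕ) : ∀ x, Cseq s x < 2 ^ s := by
  induction s with
  | zero => intro x; simp [Cseq]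
  | succ s ih =>
    intro x
    rw [Cseq]
    split
    · exact lt_of_lt_of_le (ih _) (by rw [pow_succ]; omega)
    · have := ih (x % (2 * nseq s) - nseq s); rw [pow_succ]; omega

def es : ℕ → ℕ
  | 0 => 1
  | s + 1 => es s + nseq s + 1

lemma nseq_pos (s : ℕ) : 0 < nseq s := by
  induction s with
  | zero => simp [nseq]
  | succ s ih => rw [nseq]; positivity

lemma lt_es (s : ℕ) : s < es s := by
  induction s with
  | zero => simp [es]
  | succ s ih => rw [es]; have := nseq_pos s; omega

lemma nseq_eq_pow (s : ℕ) : nseq s = 2 ^ es s := by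
  induction s with
  | zero => rfl
  | succ s ih => rw [nseq, es, ih, pow_add, pow_add, pow_one]; ring

lemma es_lt_nseq (s : ℕ) : es s < nseq s := by
  induction s with
  | zero => simp [es, nseq]
  | succ s ih =>
    rw [es, nseq]
    have h1 : 2 ≤ 2 ^ nseq s := by
      have := nseq_pos s
      calc (2:ℕ) = 2^1 := rfl
        _ ≤ 2 ^ nseq s := Nat.pow_le_pow_right (by norm_num) (by omega)
    have h2 := Nat.mul_le_mul_left (2 * nseq s) h1
    have e : 2 * nseq s * 2 = 4 * nseq s := by ring
    have := nseq_pos s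
    omega

lemma main (s : ℕ) : ∀ i, i < 2^s →
    (((Finset.range (nseq s)).filter (fun x => Cseq s x = i)).card = 2^(es s - s) ∧
     (∀ x ∈ (Finset.range (nseq s)).filter (fun x => Cseq s x = i),
        ∀ y ∈ (Finset.range (nseq s)).filter (fun x => Cseq s x = i),
        y ≤ x + (nseq s - (es s - s))) ∧
     ∀ I : Finset ℕ, IsIntervalOf I ((Finset.range (nseq s)).filter (fun x => Cseq s x = i)) →
        I.card ≤ 2 ^ gapSize I) := by
  induction s with
  | zero =>
    intro i hi
    have hi0 : i = 0 := by omega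
    subst hi0
    have hF : (Finset.range (nseq 0)).filter (fun x => Cseq 0 x = 0) = Finset.range 2 := by
      simp [nseq, Cseq]
    rw [hF]
    refine ⟨by simp [es], ?_, ?_⟩
    · intro x hx y hy
      rw [Finset.mem_range] at hx hy
      show y ≤ x + (nseq 0 - (es 0 - 0))
      rw [show nseq 0 = 2 from rfl, show es 0 = 1 from rfl]
      omega
    · intro I hI
      have hc := Finset.card_le_card hI.1
      rw [Finset.card_range] at hc
      exact card_le_pow_gapSize_of_le_two I hc
  | succ s ih =>
    intro i hi
    have hnpos := nseq_pos s
    have hes1 := lt_es s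
    have hes2 := es_lt_nseq s
    have hnn : nseq (s+1) = 2 * nseq s * 2 ^ nseq s := rfl
    have hesn : es (s+1) = es s + nseq s + 1 := rfl
    have finish : ∀ (o i' : ℕ), (o = 0 ∨ o = nseq s) → i' < 2^s →
        (∀ x, x ∈ (Finset.range (nseq (s+1))).filter (fun y => Cseq (s+1) y = i) ↔
          (x < 2*(nseq s)*(2^(nseq s)) ∧ o ≤ x % (2*(nseq s)) ∧
            x % (2*(nseq s)) - o ∈ (Finset.range (nseq s)).filter (fun y => Cseq s y = i'))) →
        (((Finset.range (nseq (s+1))).filter (fun x => Cseq (s+1) x = i)).card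
            = 2^(es (s+1) - (s+1)) ∧
         (∀ x ∈ (Finset.range (nseq (s+1))).filter (fun x => Cseq (s+1) x = i),
            ∀ y ∈ (Finset.range (nseq (s+1))).filter (fun x => Cseq (s+1) x = i),
            y ≤ x + (nseq (s+1) - (es (s+1) - (s+1)))) ∧
         ∀ I : Finset ℕ,
            IsIntervalOf I ((Finset.range (nseq (s+1))).filter (fun x => Cseq (s+1) x = i)) →
            I.card ≤ 2 ^ gapSize I) := by
      intro o i' ho hi' hmem
      obtain ⟨ih1, ih2, ih3⟩ := ih i' hi'
      have hineq : 2^(nseq s) * 2^(es s - s) ≤ 2 ^ (2*(nseq s) - (nseq s - (es s - s))) := by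
        rw [← pow_add]
        exact Nat.pow_le_pow_right (by norm_num) (by omega)
      obtain ⟨o1, o2, o3⟩ := step ((Finset.range (nseq s)).filter (fun y => Cseq s y = i'))
        ((Finset.range (nseq (s+1))).filter (fun y => Cseq (s+1) y = i))
        (nseq s) (2^(nseq s)) o (2^(es s - s)) (nseq s - (es s - s))
        hnpos ho hmem
        (fun h hh => by
          rw [Finset.mem_filter, Finset.mem_range] at hh; exact hh.1)
        ih1 ih2 ih3 hineq
      refine ⟨?_, ?_, o3⟩
      · rw [o1, ← pow_add, hesn]
        congr 1
        omega
      · intro xx hxx yy hyy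
        have hb := o2 xx hxx yy hyy
        have hK1 : (1:ℕ) ≤ 2^(nseq s) := Nat.one_le_two_pow
        have e1 : 2*(nseq s)*(2^(nseq s) - 1) + 2*(nseq s) = 2*(nseq s)*(2^(nseq s)) := by
          obtain ⟨K', hK'⟩ : ∃ K', 2^(nseq s) = K' + 1 := ⟨2^(nseq s) - 1, by omega⟩
          rw [hK', Nat.add_sub_cancel]
          ring
        rw [hnn, hesn]
        omega
    rcases Nat.lt_or_ge i (2^s) with hilt | hige
    · apply finish 0 i (Or.inl rfl) hilt
      intro x
      rw [Finset.mem_filter, Finset.mem_range, hnn]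
      constructor
      · rintro ⟨h1, h2⟩
        rw [Cseq] at h2
        split_ifs at h2 with hlt
        · refine ⟨h1, Nat.zero_le _, ?_⟩
          rw [Nat.sub_zero, Finset.mem_filter, Finset.mem_range]
          exact ⟨hlt, h2⟩
        · exfalso; have := cseq_lt s (x % (2*nseq s) - nseq s); omega
      · rintro ⟨h1, _, h3⟩
        rw [Nat.sub_zero, Finset.mem_filter, Finset.mem_range] at h3
        refine ⟨h1, ?_⟩
        rw [Cseq, if_pos h3.1]
        exact h3.2
    · have hi' : i - 2^s < 2^s := by rw [pow_succ] at hi; omega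
      apply finish (nseq s) (i - 2^s) (Or.inr rfl) hi'
      intro x
      rw [Finset.mem_filter, Finset.mem_range, hnn]
      constructor
      · rintro ⟨h1, h2⟩
        rw [Cseq] at h2
        split_ifs at h2 with hlt
        · exfalso; have := cseq_lt s (x % (2*nseq s)); omega
        · push_neg at hlt
          refine ⟨h1, hlt, ?_⟩
          rw [Finset.mem_filter, Finset.mem_range]
          have hmod := Nat.mod_lt x (show 0 < 2*nseq s by omega)
          exact ⟨by omega, by omega⟩
      · rintro ⟨h1, h2, h3⟩
        rw [Finset.mem_filter, Finset.mem_range] at h3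
        refine ⟨h1, ?_⟩
        rw [Cseq, if_neg (by omega)]
        omega

end BCaux

/-- Each color class of `C_s` on `{0,…,n_s−1}` has `n_s/2^s` elements and all its
intervals `I` satisfy `|I| ≤ 2^{gs(I)}`. -/
theorem bad_coloring_properties (s : ℕ) (i : ℕ) (hi : i < 2 ^ s) :
    ((Finset.range (nseq s)).filter (fun x => Cseq s x = i)).card = nseq s / 2 ^ s ∧
    ∀ I : Finset ℕ,
      IsIntervalOf I ((Finset.range (nseq s)).filter (fun x => Cseq s x = i)) →
      I.card ≤ 2 ^ gapSize I := by
  obtain ⟨h1, _, h3⟩ := BCaux.main s i hi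
  refine ⟨?_, h3⟩
  rw [h1, BCaux.nseq_eq_pow s, Nat.pow_div (le_of_lt (BCaux.lt_es s)) (by norm_num)]
end
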